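/- Assume the separation and scale hypotheses. Let V ∈ 𝒱, θ ∈ Θ' := Θ \ {0}, and l ∈ ℤ. Suppose ξ ∈ Ξ(V) and that both ξ and ξ + lθ lie in Λ(θ). Then θ ∈ V and ξ + lθ ∈ Ξ(V). -/

import Mathlib

open scoped RealInnerProductSpace

noncomputable section

/-- `V` is a quasi-lattice subspace of dimension `m` generated by the frequency set `Θ`. -/
def QL (d : ℕ) (Θ : Finset (EuclideanSpace ℝ (Fin d))) (m : ℕ)
    (V : Submodule ℝ (EuclideanSpace ℝ (Fin d))) : Prop :=
  ∃ v : Fin m → EuclideanSpace ℝ (Fin d),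
    (∀ i, v i ∈ Θ) ∧ LinearIndependent ℝ v ∧ V = Submodule.span ℝ (Set.range v)

/-- `V` is a quasi-lattice subspace (of some dimension). -/
def QLat (d : ℕ) (Θ : Finset (EuclideanSpace ℝ (Fin d)))
    (V : Submodule ℝ (EuclideanSpace ℝ (Fin d))) : Prop :=
  ∃ m, QL d Θ m V

/-- `Ξ₁(V)`: the union, over all flags `F` generated by `V` (with a generated sequence `ν`),
of the slabs `Λ(F) = {ξ : |⟪ξ, ν j⟫| ≤ L j}`. -/
def XiOne (d : ℕ) (Θ : Finset (EuclideanSpace ℝ (Fin d))) (L : ℕ → ℝ)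
    (V : Submodule ℝ (EuclideanSpace ℝ (Fin d))) : Set (EuclideanSpace ℝ (Fin d)) :=
  {ξ | ∃ (m : ℕ) (F : Fin (m + 1) → Submodule ℝ (EuclideanSpace ℝ (Fin d)))
        (ν : Fin m → EuclideanSpace ℝ (Fin d)),
      (∀ j : Fin (m + 1), QL d Θ (j : ℕ) (F j)) ∧
      (∀ i : Fin m, F i.castSucc < F i.succ) ∧
      F (Fin.last m) = V ∧
      (∀ i : Fin m, ‖ν i‖ = 1 ∧ ν i ∈ F i.succ ∧ ν i ∈ (F i.castSucc)ᗮ) ∧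
      (∀ i : Fin m, |⟪ξ, ν i⟫| ≤ L ((i : ℕ) + 1))}

/-- The resonance region `Ξ(V) = Ξ₁(V) \ ⋃_{U ⊋ V} Ξ₁(U)`. -/
def Xi (d : ℕ) (Θ : Finset (EuclideanSpace ℝ (Fin d))) (L : ℕ → ℝ)
    (V : Submodule ℝ (EuclideanSpace ℝ (Fin d))) : Set (EuclideanSpace ℝ (Fin d)) :=
  XiOne d Θ L V \
    ⋃ U ∈ {U : Submodule ℝ (EuclideanSpace ℝ (Fin d)) | QLat d Θ U ∧ V < U},
      XiOne d Θ L U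

/-- The resonance zone `Λ(θ) = {ξ : |⟪ξ, θ⟫| ≤ L 1 · ‖θ‖}` generated by `θ`. -/
def LamT (d : ℕ) (L : ℕ → ℝ) (θ : EuclideanSpace ℝ (Fin d)) :
    Set (EuclideanSpace ℝ (Fin d)) :=
  {ξ | |⟪ξ, θ⟫| ≤ L 1 * ‖θ‖}


/-! The key estimate: if `θ ∉ U`, `dim U = m` and `ξ ∈ Λ(θ) ∩ Ξ₁(U)`, then every unit vector
`u ∈ U + ℝθ` satisfies `|⟪ξ, u⟫| ≤ |ξ_{U+ℝθ}| ≤ (|ξ_U| + |ξ_{ℝθ}|)/s ≤ (L_1 + ⋯ + L_m + L_1)/s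
≤ L_{m+1}`, so a flag of `U` witnessing `ξ ∈ Ξ₁(U)` extends to `U + ℝθ`. Hence `θ ∈ V`, as
otherwise `ξ ∈ Ξ₁(V + ℝθ)`. A shift by `tθ` changes no inner product with a vector orthogonal
to `θ`; so if `θ` first enters the flag of `V` at `F_k`, replacing `F_1 ⊂ ⋯ ⊂ F_k` by
`ℝθ ⊂ F_1 + ℝθ ⊂ ⋯ ⊂ F_{k-1} + ℝθ = F_k` gives a flag for `ξ + tθ`: its first slab is `Λ(θ)`
and the key estimate bounds the others. Shifting back by `-lθ` rules out every `U ⊋ V`. -/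

open Submodule

section InnerProductSpace

variable {E : Type*} [NormedAddCommGroup E] [InnerProductSpace ℝ E]

lemma exists_norm_eq_one_mem_orthogonal_of_lt {U W : Submodule ℝ E} [U.HasOrthogonalProjection]
    (h : U < W) : ∃ u, ‖u‖ = 1 ∧ u ∈ W ∧ u ∈ Uᗮ := by
  obtain ⟨w, hw, hw0⟩ : ∃ w ∈ Uᗮ ⊓ W, w ≠ 0 := by
    by_contra! hbot
    have hsup := sup_orthogonal_inf_of_hasOrthogonalProjection h.le
    rw [(Submodule.eq_bot_iff _).2 hbot, sup_bot_eq] at hsup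
    exact h.ne hsup
  exact ⟨‖w‖⁻¹ • w, norm_smul_inv_norm hw0, W.smul_mem _ hw.2, Uᗮ.smul_mem _ hw.1⟩

lemma abs_inner_le_norm_starProjection_mul_norm {K : Submodule ℝ E} [K.HasOrthogonalProjection]
    {u : E} (hu : u ∈ K) (ξ : E) : |⟪ξ, u⟫| ≤ ‖K.starProjection ξ‖ * ‖u‖ := by
  rw [← starProjection_eq_self_iff.2 hu, ← inner_starProjection_left_eq_right,
    starProjection_eq_self_iff.2 hu]
  exact abs_real_inner_le_norm _ _

lemma norm_starProjection_span_singleton (θ ξ : E) :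
    ‖(ℝ ∙ θ).starProjection ξ‖ = |⟪θ, ξ⟫| / ‖θ‖ := by
  rcases eq_or_ne θ 0 with rfl | hθ
  · simp
  rw [starProjection_singleton, norm_smul, Real.norm_eq_abs, abs_div]
  simp only [RCLike.ofReal_real_eq_id, id_eq, abs_pow, abs_norm]
  field_simp

lemma starProjection_sup_span_singleton {U : Submodule ℝ E} [U.HasOrthogonalProjection] {ν : E}
    [(U ⊔ (ℝ ∙ ν)).HasOrthogonalProjection] (hνU : ν ∈ Uᗮ) (hν : ‖ν‖ = 1) (ξ : E) :
    (U ⊔ (ℝ ∙ ν)).starProjection ξ = U.starProjection ξ + ⟪ν, ξ⟫ • ν := by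
  refine eq_starProjection_of_mem_of_inner_eq_zero
    (add_mem (mem_sup_left (starProjection_apply_mem U ξ))
      (mem_sup_right (smul_mem _ _ (mem_span_singleton_self ν)))) fun w hw => ?_
  obtain ⟨u, hu, v, hv, rfl⟩ := mem_sup.1 hw
  obtain ⟨c, rfl⟩ := mem_span_singleton.1 hv
  have hνu : ⟪ν, u⟫ = 0 := (mem_orthogonal' U ν).1 hνU u hu
  have hPν : ⟪U.starProjection ξ, ν⟫ = 0 :=
    (mem_orthogonal U ν).1 hνU _ (starProjection_apply_mem U ξ)
  have hξu : ⟪ξ - U.starProjection ξ, u⟫ = 0 := starProjection_inner_eq_zero ξ u hu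
  rw [← sub_sub, inner_add_right, inner_sub_left, hξu, inner_smul_right, inner_sub_left,
    inner_sub_left, hPν, real_inner_smul_left, real_inner_smul_left, hνu,
    real_inner_self_eq_norm_sq, hν, real_inner_comm ν ξ]
  ring

end InnerProductSpace

local notation "𝔼" d => EuclideanSpace ℝ (Fin d)

namespace QL

variable {d m : ℕ} {Θ : Finset (𝔼 d)} {U V : Submodule ℝ (𝔼 d)}

lemma finrank_eq (h : QL d Θ m V) : Module.finrank ℝ V = m := by
  obtain ⟨v, -, hli, rfl⟩ := h
  rw [finrank_span_eq_card hli, Fintype.card_fin]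

lemma le_dim (h : QL d Θ m V) : m ≤ d := by
  simpa [h.finrank_eq, finrank_euclideanSpace_fin] using V.finrank_le

lemma eq_bot (h : QL d Θ 0 V) : V = ⊥ :=
  Submodule.finrank_eq_zero.1 h.finrank_eq

lemma bot : QL d Θ 0 ⊥ :=
  ⟨Fin.elim0, fun i => i.elim0, linearIndependent_empty_type, by simp⟩

lemma sup_span_singleton (h : QL d Θ m V) {θ : 𝔼 d} (hθ : θ ∈ Θ) (hθV : θ ∉ V) :
    QL d Θ (m + 1) (V ⊔ (ℝ ∙ θ)) := by
  obtain ⟨v, hvΘ, hli, rfl⟩ := h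
  refine ⟨Fin.snoc v θ, Fin.lastCases (by simpa using hθ) fun i => by simpa using hvΘ i,
    linearIndependent_finSnoc.2 ⟨hli, hθV⟩, ?_⟩
  rw [Fin.range_snoc, span_insert, sup_comm]

lemma eq_sup_span_singleton (hU : QL d Θ m U) (hV : QL d Θ (m + 1) V) (hUV : U ≤ V)
    {ν : 𝔼 d} (hνV : ν ∈ V) (hνU : ν ∉ U) : V = U ⊔ (ℝ ∙ ν) := by
  refine (eq_of_le_of_finrank_le (sup_le hUV ((span_singleton_le_iff_mem _ _).2 hνV)) ?_).symm
  rw [hV.finrank_eq, ← hU.finrank_eq]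
  exact finrank_lt_finrank_of_lt (left_lt_sup.2 (by rwa [span_singleton_le_iff_mem]))

end QL

def QLSeparated (d : ℕ) (Θ : Finset (𝔼 d)) (s : ℝ) : Prop :=
  ∀ U V : Submodule ℝ (𝔼 d), QLat d Θ U → QLat d Θ V → ¬ U ≤ V → ¬ V ≤ U → ∀ ξ : 𝔼 d,
    ‖(orthogonalProjectionOnto (U ⊔ V) ξ : 𝔼 d)‖ ≤
      (‖(orthogonalProjectionOnto U ξ : 𝔼 d)‖ + ‖(orthogonalProjectionOnto V ξ : 𝔼 d)‖) / s

/-- The bound of the key estimate fits into the next slab. -/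
def SlabGrowth (d : ℕ) (L : ℕ → ℝ) (s : ℝ) : Prop :=
  ∀ m, 1 ≤ m → m + 1 ≤ d → (∑ i ∈ Finset.range m, L (i + 1) + L 1) / s ≤ L (m + 1)

lemma slabGrowth_of_scale {d : ℕ} {L : ℕ → ℝ} (hL1 : 0 < L 1)
    (hLmono : ∀ j, 1 ≤ j → j < d → L j ≤ L (j + 1)) {s R : ℝ} (hs0 : 0 < s) (hR : 0 ≤ R)
    (hscale : ∀ j, 1 ≤ j → j + 1 ≤ d → 2 * d * L j / s + R ≤ L (j + 1)) :
    SlabGrowth d L s := by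
  intro m hm hmd
  have hmono : MonotoneOn L (Set.Icc 1 d) :=
    monotoneOn_of_le_succ Set.ordConnected_Icc fun j _ hj hj' => by
      rw [Order.succ_eq_add_one] at hj' ⊢
      exact hLmono j hj.1 hj'.2
  have hLm : ∀ j, 1 ≤ j → j ≤ m → L j ≤ L m := fun j hj hjm =>
    hmono ⟨hj, by omega⟩ ⟨hm, by omega⟩ hjm
  have hsum : ∑ i ∈ Finset.range m, L (i + 1) ≤ m * L m := by
    simpa using Finset.sum_le_card_nsmul _ _ _ fun i hi =>
      hLm (i + 1) (by omega) (Finset.mem_range.1 hi)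
  have hL1m := hLm 1 le_rfl hm
  have hmd' : (m : ℝ) + 1 ≤ d := by exact_mod_cast hmd
  calc (∑ i ∈ Finset.range m, L (i + 1) + L 1) / s ≤ 2 * d * L m / s := by
        gcongr
        nlinarith
    _ ≤ 2 * d * L m / s + R := le_add_of_nonneg_right hR
    _ ≤ L (m + 1) := hscale m hm hmd

/-- `FlagSlab Θ L ξ m V`: `ξ ∈ Λ(F)` for a flag `F` generated by `V` (so `m = dim V`), with the
flag built one subspace at a time. -/
inductive FlagSlab {d : ℕ} (Θ : Finset (𝔼 d)) (L : ℕ → ℝ) (ξ : 𝔼 d) :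
    ℕ → Submodule ℝ (𝔼 d) → Prop
  | bot : FlagSlab Θ L ξ 0 ⊥
  | snoc {m : ℕ} {U V : Submodule ℝ (𝔼 d)} {ν : 𝔼 d} :
      FlagSlab Θ L ξ m U → QL d Θ (m + 1) V → U < V → ‖ν‖ = 1 → ν ∈ V → ν ∈ Uᗮ →
      |⟪ξ, ν⟫| ≤ L (m + 1) → FlagSlab Θ L ξ (m + 1) V

namespace FlagSlab

variable {d m : ℕ} {Θ : Finset (𝔼 d)} {L : ℕ → ℝ} {s : ℝ} {ξ θ : 𝔼 d}
  {U V : Submodule ℝ (𝔼 d)}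

lemma ql (h : FlagSlab Θ L ξ m V) : QL d Θ m V := by
  cases h with
  | bot => exact QL.bot
  | snoc _ hV => exact hV

lemma of_mem_XiOne (h : ξ ∈ XiOne d Θ L V) : ∃ m, FlagSlab Θ L ξ m V := by
  obtain ⟨m, F, ν, hF, hlt, rfl, hν, hslab⟩ := h
  suffices ∀ n (hn : n ≤ m), FlagSlab Θ L ξ n (F ⟨n, by omega⟩) from ⟨m, this m le_rfl⟩
  intro n hn
  induction n with
  | zero => exact (hF 0).eq_bot ▸ bot
  | succ n ih =>
    obtain ⟨hν1, hνF, hνF'⟩ := hν ⟨n, hn⟩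
    exact snoc (ih (by omega)) (hF ⟨n + 1, by omega⟩) (hlt ⟨n, hn⟩) hν1 hνF hνF' (hslab ⟨n, hn⟩)

lemma mem_XiOne (h : FlagSlab Θ L ξ m V) : ξ ∈ XiOne d Θ L V := by
  induction h with
  | bot =>
    exact ⟨0, fun _ => ⊥, Fin.elim0, fun j => Fin.fin_one_eq_zero j ▸ QL.bot, Fin.elim0, rfl,
      fun i => i.elim0, fun i => i.elim0⟩
  | @snoc m U V ν hU hV hUV hν1 hνV hνU hslab ih =>
    obtain ⟨k, F, e, hF, hlt, hlast, he, heslab⟩ := ih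
    obtain rfl : m = k := by
      have hk := (hF (Fin.last k)).finrank_eq
      rwa [hlast, hU.ql.finrank_eq] at hk
    refine ⟨m + 1, Fin.snoc F V, Fin.snoc e ν, Fin.lastCases ?_ fun j => ?_,
      Fin.lastCases ?_ fun i => ?_, Fin.snoc_last _ _, Fin.lastCases ?_ fun i => ?_,
      Fin.lastCases ?_ fun i => ?_⟩
    · simpa using hV
    · simpa using hF j
    · simpa [hlast] using hUV
    · simpa only [Fin.succ_castSucc, Fin.snoc_castSucc] using hlt i
    · simpa [hlast] using ⟨hν1, hνV, hνU⟩
    · simpa only [Fin.succ_castSucc, Fin.snoc_castSucc] using he i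
    · simpa using hslab
    · simpa using heslab i

lemma norm_starProjection_le (h : FlagSlab Θ L ξ m V) :
    ‖V.starProjection ξ‖ ≤ ∑ i ∈ Finset.range m, L (i + 1) := by
  induction h with
  | bot => simp
  | @snoc m U V ν hU hV hUV hν1 hνV hνU hslab ih =>
    have hνU' : ν ∉ U := fun hν => by
      have hν0 : ν = 0 := (orthogonal_disjoint U).le_bot ⟨hν, hνU⟩
      simp [hν0] at hν1
    rw [hU.ql.eq_sup_span_singleton hV hUV.le hνV hνU', starProjection_sup_span_singleton hνU hν1,
      Finset.sum_range_succ]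
    calc ‖U.starProjection ξ + ⟪ν, ξ⟫ • ν‖ ≤ ‖U.starProjection ξ‖ + |⟪ξ, ν⟫| := by
          simpa [norm_smul, hν1, real_inner_comm] using norm_add_le _ (⟪ν, ξ⟫ • ν)
      _ ≤ _ := add_le_add ih hslab

lemma abs_inner_le_of_mem_sup (hsep : QLSeparated d Θ s) (hs0 : 0 < s)
    (hgrowth : SlabGrowth d L s) (h : FlagSlab Θ L ξ m U) (hθ : θ ∈ Θ) (hθU : θ ∉ U)
    (hξθ : ξ ∈ LamT d L θ) {u : 𝔼 d} (hu : u ∈ U ⊔ (ℝ ∙ θ)) (hu1 : ‖u‖ = 1) :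
    |⟪ξ, u⟫| ≤ L (m + 1) := by
  have hθ0 : θ ≠ 0 := fun h0 => hθU (h0 ▸ U.zero_mem)
  have hPθ : ‖(ℝ ∙ θ).starProjection ξ‖ ≤ L 1 := by
    rw [norm_starProjection_span_singleton, div_le_iff₀ (norm_pos_iff.2 hθ0), real_inner_comm]
    exact hξθ
  rcases Nat.eq_zero_or_pos m with rfl | hm
  · obtain rfl := h.ql.eq_bot
    rw [bot_sup_eq] at hu
    calc |⟪ξ, u⟫| ≤ ‖(ℝ ∙ θ).starProjection ξ‖ * ‖u‖ :=
          abs_inner_le_norm_starProjection_mul_norm hu ξ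
      _ ≤ L (0 + 1) := by simpa [hu1] using hPθ
  have hUθ : ¬ U ≤ ℝ ∙ θ := fun hle => hθU <| by
    rw [eq_of_le_of_finrank_le hle (by rw [finrank_span_singleton hθ0, h.ql.finrank_eq]; omega)]
    exact mem_span_singleton_self θ
  have hsepUθ := hsep U (ℝ ∙ θ) ⟨m, h.ql⟩
    ⟨1, by simpa using QL.bot.sup_span_singleton hθ (by simpa using hθ0)⟩ hUθ
    (by rwa [span_singleton_le_iff_mem]) ξ
  simp only [coe_orthogonalProjectionOnto_apply] at hsepUθ
  calc |⟪ξ, u⟫| ≤ ‖(U ⊔ (ℝ ∙ θ)).starProjection ξ‖ * ‖u‖ :=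
        abs_inner_le_norm_starProjection_mul_norm hu ξ
    _ ≤ (‖U.starProjection ξ‖ + ‖(ℝ ∙ θ).starProjection ξ‖) / s := by simpa [hu1] using hsepUθ
    _ ≤ (∑ i ∈ Finset.range m, L (i + 1) + L 1) / s := by
      gcongr
      exact h.norm_starProjection_le
    _ ≤ L (m + 1) := hgrowth m hm (h.ql.sup_span_singleton hθ hθU).le_dim

lemma add_smul_sup (hsep : QLSeparated d Θ s) (hs0 : 0 < s) (hgrowth : SlabGrowth d L s)
    (h : FlagSlab Θ L ξ m U) (hθ : θ ∈ Θ) (hθU : θ ∉ U) (h1 : ξ ∈ LamT d L θ) {t : ℝ}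
    (h2 : ξ + t • θ ∈ LamT d L θ) : FlagSlab Θ L (ξ + t • θ) (m + 1) (U ⊔ (ℝ ∙ θ)) := by
  induction h with
  | bot =>
    have hlt : (⊥ : Submodule ℝ (𝔼 d)) < ⊥ ⊔ (ℝ ∙ θ) :=
      left_lt_sup.2 (by rwa [span_singleton_le_iff_mem])
    obtain ⟨u, hu1, huθ, -⟩ := exists_norm_eq_one_mem_orthogonal_of_lt hlt
    refine snoc bot (QL.bot.sup_span_singleton hθ hθU) hlt hu1 huθ (by simp) ?_
    exact abs_inner_le_of_mem_sup hsep hs0 hgrowth bot hθ hθU h2 huθ hu1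
  | @snoc m U' U ν hU' hU hU'U hν1 hνU hνU' hslab ih =>
    have hθU' : θ ∉ U' := fun h => hθU (hU'U.le h)
    have hlt : U' ⊔ (ℝ ∙ θ) < U ⊔ (ℝ ∙ θ) := by
      refine lt_of_le_of_finrank_lt_finrank (sup_le_sup_right hU'U.le _) ?_
      rw [(hU'.ql.sup_span_singleton hθ hθU').finrank_eq, (hU.sup_span_singleton hθ hθU).finrank_eq]
      omega
    obtain ⟨u, hu1, huθU, huθU'⟩ := exists_norm_eq_one_mem_orthogonal_of_lt hlt
    have hθu : ⟪θ, u⟫ = 0 :=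
      (mem_orthogonal _ u).1 huθU' θ (mem_sup_right (mem_span_singleton_self θ))
    refine snoc (ih hθU') (hU.sup_span_singleton hθ hθU) hlt hu1 huθU huθU' ?_
    rw [inner_add_left, real_inner_smul_left, hθu, mul_zero, add_zero]
    exact abs_inner_le_of_mem_sup hsep hs0 hgrowth (snoc hU' hU hU'U hν1 hνU hνU' hslab) hθ hθU h1
      huθU hu1

lemma add_smul_of_mem (hsep : QLSeparated d Θ s) (hs0 : 0 < s) (hgrowth : SlabGrowth d L s)
    (h : FlagSlab Θ L ξ m V) (hθ : θ ∈ Θ) (hθV : θ ∈ V) (h1 : ξ ∈ LamT d L θ) {t : ℝ}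
    (h2 : ξ + t • θ ∈ LamT d L θ) : FlagSlab Θ L (ξ + t • θ) m V := by
  induction h with
  | bot => exact bot
  | @snoc m U V ν hU hV hUV hν1 hνV hνU hslab ih =>
    by_cases hθU : θ ∈ U
    · have hθν : ⟪θ, ν⟫ = 0 := (mem_orthogonal _ ν).1 hνU θ hθU
      refine snoc (ih hθU) hV hUV hν1 hνV hνU ?_
      rwa [inner_add_left, real_inner_smul_left, hθν, mul_zero, add_zero]
    · rw [hU.ql.eq_sup_span_singleton hV hUV.le hθV hθU]
      exact hU.add_smul_sup hsep hs0 hgrowth hθ hθU h1 h2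

end FlagSlab

theorem xi_invariant_under_resonant_shift_general (d : ℕ)
    (Θ : Finset (EuclideanSpace ℝ (Fin d)))
    (L : ℕ → ℝ) (hL1 : 0 < L 1)
    (hLmono : ∀ j, 1 ≤ j → j < d → L j ≤ L (j + 1))
    (s : ℝ) (hs0 : 0 < s)
    (hsep : ∀ U V : Submodule ℝ (EuclideanSpace ℝ (Fin d)), QLat d Θ U → QLat d Θ V →
      ¬ U ≤ V → ¬ V ≤ U → ∀ ξ : EuclideanSpace ℝ (Fin d),
        ‖(Submodule.orthogonalProjectionOnto (U ⊔ V) ξ : EuclideanSpace ℝ (Fin d))‖ ≤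
          (‖(Submodule.orthogonalProjectionOnto U ξ : EuclideanSpace ℝ (Fin d))‖ +
            ‖(Submodule.orthogonalProjectionOnto V ξ : EuclideanSpace ℝ (Fin d))‖) / s)
    (R : ℝ) (hR : ∀ θ ∈ Θ, ‖θ‖ ≤ R)
    (hscale : ∀ j, 1 ≤ j → j + 1 ≤ d → 2 * d * L j / s + R ≤ L (j + 1))
    (V : Submodule ℝ (EuclideanSpace ℝ (Fin d)))
    (θ : EuclideanSpace ℝ (Fin d)) (hθ : θ ∈ Θ) (l : ℤ)
    (ξ : EuclideanSpace ℝ (Fin d)) (hξ : ξ ∈ Xi d Θ L V)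
    (h1 : ξ ∈ LamT d L θ) (h2 : ξ + (l : ℝ) • θ ∈ LamT d L θ) :
    θ ∈ V ∧ ξ + (l : ℝ) • θ ∈ Xi d Θ L V := by
  have hgrowth : SlabGrowth d L s :=
    slabGrowth_of_scale hL1 hLmono hs0 ((norm_nonneg θ).trans (hR θ hθ)) hscale
  obtain ⟨hξV, hξU⟩ := hξ
  obtain ⟨m, hm⟩ := FlagSlab.of_mem_XiOne hξV
  have hθV : θ ∈ V := by
    by_contra hθV
    have hVθ : V < V ⊔ (ℝ ∙ θ) := left_lt_sup.2 (by rwa [span_singleton_le_iff_mem])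
    refine hξU (Set.mem_biUnion ⟨⟨m + 1, hm.ql.sup_span_singleton hθ hθV⟩, hVθ⟩ ?_)
    simpa using (hm.add_smul_sup hsep hs0 hgrowth hθ hθV h1 (t := 0) (by simpa using h1)).mem_XiOne
  refine ⟨hθV, (hm.add_smul_of_mem hsep hs0 hgrowth hθ hθV h1 h2).mem_XiOne, ?_⟩
  simp only [Set.mem_iUnion]
  rintro ⟨U, ⟨hU, hVU⟩, hU'⟩
  obtain ⟨n, hn⟩ := FlagSlab.of_mem_XiOne hU'
  refine hξU (Set.mem_biUnion ⟨hU, hVU⟩ ?_)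
  simpa using (hn.add_smul_of_mem hsep hs0 hgrowth hθ (hVU.le hθV) h2 (t := -l)
    (by simpa using h1)).mem_XiOne

theorem xi_invariant_under_resonant_shift (d : ℕ) (hd : 1 ≤ d)
    (Θ : Finset (EuclideanSpace ℝ (Fin d)))
    (h0 : (0 : EuclideanSpace ℝ (Fin d)) ∈ Θ)
    (hsym : ∀ θ ∈ Θ, -θ ∈ Θ)
    (hspan : Submodule.span ℝ (Θ : Set (EuclideanSpace ℝ (Fin d))) = ⊤)
    (L : ℕ → ℝ) (hL1 : 0 < L 1)
    (hLmono : ∀ j, 1 ≤ j → j < d → L j ≤ L (j + 1))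
    (s : ℝ) (hs0 : 0 < s) (hs1 : s ≤ 1)
    (hsep : ∀ U V : Submodule ℝ (EuclideanSpace ℝ (Fin d)), QLat d Θ U → QLat d Θ V →
      ¬ U ≤ V → ¬ V ≤ U → ∀ ξ : EuclideanSpace ℝ (Fin d),
        ‖(Submodule.orthogonalProjectionOnto (U ⊔ V) ξ : EuclideanSpace ℝ (Fin d))‖ ≤
          (‖(Submodule.orthogonalProjectionOnto U ξ : EuclideanSpace ℝ (Fin d))‖ +
            ‖(Submodule.orthogonalProjectionOnto V ξ : EuclideanSpace ℝ (Fin d))‖) / s)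
    (R : ℝ) (hR : ∀ θ ∈ Θ, ‖θ‖ ≤ R)
    (hscale : ∀ j, 1 ≤ j → j + 1 ≤ d → 2 * d * L j / s + R ≤ L (j + 1))
    (V : Submodule ℝ (EuclideanSpace ℝ (Fin d))) (hV : QLat d Θ V)
    (θ : EuclideanSpace ℝ (Fin d)) (hθ : θ ∈ Θ) (hθ0 : θ ≠ 0) (l : ℤ)
    (ξ : EuclideanSpace ℝ (Fin d)) (hξ : ξ ∈ Xi d Θ L V)
    (h1 : ξ ∈ LamT d L θ) (h2 : ξ + (l : ℝ) • θ ∈ LamT d L θ) :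
    θ ∈ V ∧ ξ + (l : ℝ) • θ ∈ Xi d Θ L V :=
  xi_invariant_under_resonant_shift_general d Θ L hL1 hLmono s hs0 hsep R hR hscale V θ hθ l ξ hξ h1
    h2
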